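/- Let n ≥ 5, let w be a k-uniform word representing the crown graph H_{n,n}, and suppose some cyclic shift of w has its subword induced by A = {1, …, n} equal to a concatenation P′₁⋯P′_k, where each P′_j contains every element of A exactly once. Then for every a ∈ A there exists j ∈ {1, …, k} such that a is the first letter of P′_j or a is the last letter of P′_j. -/

import Mathlib

/-- Letters `x` and `y` alternate in the word `w`. -/
def Alternate {V : Type*} [DecidableEq V] (w : List V) (x y : V) : Prop :=
  (w.filter fun z => decide (z = x ∨ z = y)).Chain' (· ≠ ·)

/-- The word `w` represents the simple graph `G`. -/
def Represents {V : Type*} [DecidableEq V] (w : List V) (G : SimpleGraph V) : Prop :=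
  (∀ v : V, v ∈ w) ∧ ∀ x y : V, x ≠ y → (G.Adj x y ↔ Alternate w x y)

/-- Each letter of the alphabet occurs exactly `k` times in `w`. -/
def IsUniform {V : Type*} [DecidableEq V] (w : List V) (k : ℕ) : Prop :=
  ∀ v : V, w.count v = k

/-- The crown graph `H_{n,n}`. -/
def Crown (n : ℕ) : SimpleGraph (Fin n ⊕ Fin n) :=
  SimpleGraph.fromRel fun x y =>
    match x, y with
    | Sum.inl i, Sum.inr j => i ≠ j
    | _, _ => False

/-- `P` is a permutation of the set `A`: each element of `A` occurs exactly once. -/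
def IsPermOf {V : Type*} [DecidableEq V] (P : List V) (A : Finset V) : Prop :=
  (∀ a ∈ A, P.count a = 1) ∧ ∀ x ∈ P, x ∈ A


/-- The "left" part `{1, …, n}` of the vertex set of the crown graph `H_{n,n}`. -/
def leftSet (n : ℕ) : Finset (Fin n ⊕ Fin n) :=
  Finset.univ.filter fun z => z.isLeft

/-!
Replace `w = u ++ u'` by its cyclic shift `u' ++ u`: since every letter occurs `k` times,
alternation is unchanged. Two letters `x, y` alternate iff along all prefixes the number of
`x`'s stays between the number of `y`'s and that number plus one, or vice versa.

Let `x = inl a` and `x' = inr a`. Every other left letter `b` alternates with `x'`, no two left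
letters alternate, and along prefixes the counts of left letters differ by at most one because
the left subword is a concatenation of permutations. Hence either every such `b` is ahead of
`x'` or every such `b` is behind it. If `a` is never the first letter of a permutation, then at
every prefix some `b ≠ a` has occurred at least as often as `a`; if it is never the last letter,
some `b ≠ a` has occurred at most as often. Squeezing the count of `a` between these shows that
`x` and `x'` alternate, although they are not adjacent in the crown graph.
-/

theorem List.IsPrefix.prefix_or_eq_append {α : Type*} {p l₁ l₂ : List α}
    (h : p <+: l₁ ++ l₂) : p <+: l₁ ∨ ∃ q, p = l₁ ++ q ∧ q <+: l₂ := by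
  obtain ⟨t, ht⟩ := h
  rcases List.append_eq_append_iff.mp ht with ⟨r, hr, -⟩ | ⟨q, hq, ht⟩
  · exact Or.inl ⟨r, hr.symm⟩
  · exact Or.inr ⟨q, hq, t, ht.symm⟩

variable {V : Type*} [DecidableEq V]

/-- Alternation of `x` and `y` in `w` starting with `x` (see `leads_iff_isChain`), phrased
through prefix counts so that cyclic shifts and the comparison with the permutation blocks
become arithmetic. -/
def Leads (w : List V) (x y : V) : Prop :=
  ∀ p, p <+: w → p.count y ≤ p.count x ∧ p.count x ≤ p.count y + 1

theorem leads_nil (x y : V) : Leads [] x y := by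
  intro p hp
  simp [List.prefix_nil.mp hp]

theorem leads_cons_self {x y : V} {w : List V} (hxy : x ≠ y) :
    Leads (x :: w) x y ↔ Leads w y x := by
  constructor
  · intro h t ht
    have := h (x :: t) (List.cons_prefix_cons.mpr ⟨rfl, ht⟩)
    rw [List.count_cons_self, List.count_cons_of_ne hxy] at this
    omega
  · intro h p hp
    rcases List.prefix_cons_iff.mp hp with rfl | ⟨t, rfl, ht⟩
    · simp
    · have := h t ht
      rw [List.count_cons_self, List.count_cons_of_ne hxy]
      omega

theorem not_leads_cons {x y : V} {w : List V} (hxy : x ≠ y) : ¬ Leads (y :: w) x y := by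
  intro h
  have := (h [y] (List.cons_prefix_cons.mpr ⟨rfl, List.nil_prefix⟩)).1
  simp [hxy] at this

theorem leads_cons_of_ne {x y z : V} {w : List V} (hx : z ≠ x) (hy : z ≠ y) :
    Leads (z :: w) x y ↔ Leads w x y := by
  constructor
  · intro h t ht
    have := h (z :: t) (List.cons_prefix_cons.mpr ⟨rfl, ht⟩)
    rwa [List.count_cons_of_ne hx, List.count_cons_of_ne hy] at this
  · intro h p hp
    rcases List.prefix_cons_iff.mp hp with rfl | ⟨t, rfl, ht⟩
    · simp
    · rw [List.count_cons_of_ne hx, List.count_cons_of_ne hy]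
      exact h t ht

theorem filter_eq_or_comm (w : List V) (x y : V) :
    w.filter (fun z => decide (z = y ∨ z = x)) =
      w.filter (fun z => decide (z = x ∨ z = y)) := by
  simp only [or_comm]

theorem leads_iff_isChain {x y : V} {w : List V} (hxy : x ≠ y) :
    Leads w x y ↔ (y :: w.filter (fun z => decide (z = x ∨ z = y))).IsChain (· ≠ ·) := by
  induction w generalizing x y with
  | nil => simp [leads_nil]
  | cons z w ih =>
    by_cases hzx : z = x
    · subst hzx
      rw [leads_cons_self hxy, ih hxy.symm, filter_eq_or_comm w z y]
      simp [hxy.symm]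
    by_cases hzy : z = y
    · subst hzy
      simp [not_leads_cons hxy]
    · rw [leads_cons_of_ne hzx hzy, ih hxy]
      simp [hzx, hzy]

theorem alternate_iff_leads {x y : V} {w : List V} (hxy : x ≠ y) :
    Alternate w x y ↔ Leads w x y ∨ Leads w y x := by
  rw [leads_iff_isChain hxy, leads_iff_isChain hxy.symm, filter_eq_or_comm w x y, Alternate,
    List.Chain']
  rcases h : w.filter (fun z => decide (z = x ∨ z = y)) with _ | ⟨z, l⟩
  · simp
  · have hz : z = x ∨ z = y :=
      of_decide_eq_true (List.mem_filter.mp (h ▸ List.mem_cons_self : z ∈ _)).2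
    rcases hz with rfl | rfl <;> simp [hxy, hxy.symm]

/-- The excess of `x` over `y` in `u`, which is `0` or `1`, decides which letter leads after
the shift. -/
theorem Leads.append_comm {x y : V} {u v : List V} (h : Leads (u ++ v) x y)
    (hc : (u ++ v).count x = (u ++ v).count y) : Leads (v ++ u) x y ∨ Leads (v ++ u) y x := by
  have hu := h u (List.prefix_append u v)
  rw [List.count_append, List.count_append] at hc
  by_cases hδ : u.count x = u.count y
  · left
    intro p hp
    rcases hp.prefix_or_eq_append with hp | ⟨q, rfl, hq⟩
    · have := h (u ++ p) ((List.prefix_append_right_inj u).mpr hp)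
      simp only [List.count_append] at this
      omega
    · have := h q (hq.trans (List.prefix_append u v))
      simp only [List.count_append]
      omega
  · right
    intro p hp
    rcases hp.prefix_or_eq_append with hp | ⟨q, rfl, hq⟩
    · have := h (u ++ p) ((List.prefix_append_right_inj u).mpr hp)
      simp only [List.count_append] at this
      omega
    · have := h q (hq.trans (List.prefix_append u v))
      simp only [List.count_append]
      omega

theorem Alternate.append_comm {x y : V} {u v : List V} (hxy : x ≠ y)
    (h : Alternate (u ++ v) x y) (hc : (u ++ v).count x = (u ++ v).count y) :
    Alternate (v ++ u) x y := by
  rw [alternate_iff_leads hxy] at h ⊢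
  rcases h with h | h
  · exact h.append_comm hc
  · exact (h.append_comm hc.symm).symm

theorem IsUniform.alternate_append_comm {u v : List V} {k : ℕ} {x y : V}
    (h : IsUniform (u ++ v) k) (hxy : x ≠ y) :
    Alternate (u ++ v) x y ↔ Alternate (v ++ u) x y := by
  have h' : IsUniform (v ++ u) k := fun z => by
    rw [List.count_append, add_comm, ← List.count_append, h]
  exact ⟨fun hu => hu.append_comm hxy (by rw [h, h]),
    fun hv => hv.append_comm hxy (by rw [h', h'])⟩

theorem IsUniform.ne_zero {w : List V} {k : ℕ} {x : V} (h : IsUniform w k) (hx : x ∈ w) :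
    k ≠ 0 :=
  h x ▸ (List.count_pos_iff.mpr hx).ne'

theorem IsPermOf.nodup {P : List V} {A : Finset V} (h : IsPermOf P A) : P.Nodup := by
  refine List.nodup_iff_count_le_one.mpr fun a => ?_
  by_cases ha : a ∈ P
  · exact (h.1 a (h.2 a ha)).le
  · simp [List.count_eq_zero.mpr ha]

theorem IsPermOf.mem {P : List V} {A : Finset V} {a : V} (h : IsPermOf P A) (ha : a ∈ A) :
    a ∈ P :=
  List.count_pos_iff.mp (by rw [h.1 a ha]; exact one_pos)

theorem List.IsPrefix.count_le_count_of_head?_eq {q l : List V} {a b : V} (hq : q <+: l)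
    (hl : l.Nodup) (hb : l.head? = some b) : q.count a ≤ q.count b := by
  rcases q with _ | ⟨c, q⟩
  · simp
  · obtain rfl : c = b := by obtain ⟨t, rfl⟩ := hq; simpa using hb
    calc (c :: q).count a ≤ 1 := (hq.count_le a).trans (List.nodup_iff_count_le_one.mp hl a)
      _ ≤ _ := List.count_pos_iff.mpr List.mem_cons_self

theorem List.IsPrefix.count_le_count_of_getLast?_eq {q l : List V} {a b : V} (hq : q <+: l)
    (hl : l.Nodup) (hb : l.getLast? = some b) (ha : a ∈ l) : q.count b ≤ q.count a := by
  by_cases haq : a ∈ q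
  · calc q.count b ≤ 1 := (hq.count_le b).trans (List.nodup_iff_count_le_one.mp hl b)
      _ ≤ q.count a := List.count_pos_iff.mpr haq
  · obtain ⟨t, rfl⟩ := hq
    have ht : a ∈ t := by simpa [haq] using ha
    rw [List.getLast?_append_of_ne_nil _ (List.ne_nil_of_mem ht)] at hb
    have hbt := List.count_pos_iff.mpr (List.mem_of_getLast? hb)
    have h1 := List.nodup_iff_count_le_one.mp hl b
    rw [List.count_append] at h1
    omega

section Blocks

variable {A : Finset V} {L : List (List V)} {w p : List V}

theorem exists_count_eq_of_prefix_flatten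
    (hL : ∀ B ∈ L, IsPermOf B A) (hL0 : L ≠ []) (hp : p <+: L.flatten) :
    ∃ j, ∃ B ∈ L, ∃ q, q <+: B ∧ ∀ a ∈ A, p.count a = j + q.count a := by
  induction L generalizing p with
  | nil => exact absurd rfl hL0
  | cons B L ih =>
    have hB := hL B List.mem_cons_self
    rw [List.flatten_cons] at hp
    rcases hp.prefix_or_eq_append with hp | ⟨q, rfl, hq⟩
    · exact ⟨0, B, List.mem_cons_self, p, hp, by simp⟩
    rcases eq_or_ne L [] with rfl | hL0
    · obtain rfl : q = [] := by simpa using hq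
      exact ⟨1, B, List.mem_cons_self, [], List.nil_prefix, fun a ha => by simp [hB.1 a ha]⟩
    · obtain ⟨j, B', hB', q', hq', hcount⟩ :=
        ih (fun B hB => hL B (List.mem_cons_of_mem _ hB)) hL0 hq
      refine ⟨j + 1, B', List.mem_cons_of_mem _ hB', q', hq', fun a ha => ?_⟩
      rw [List.count_append, hB.1 a ha, hcount a ha]
      ring

theorem exists_count_eq_of_prefix (hL : ∀ B ∈ L, IsPermOf B A) (hL0 : L ≠ [])
    (hw : w.filter (fun z => decide (z ∈ A)) = L.flatten) (hp : p <+: w) :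
    ∃ j, ∃ B ∈ L, ∃ q, q <+: B ∧ ∀ a ∈ A, p.count a = j + q.count a := by
  obtain ⟨j, B, hB, q, hq, hcount⟩ :=
    exists_count_eq_of_prefix_flatten hL hL0 (hw ▸ hp.filter _)
  refine ⟨j, B, hB, q, hq, fun a ha => ?_⟩
  rw [← hcount a ha, List.count_filter (by simpa using ha)]

theorem count_le_count_add_one_of_prefix (hL : ∀ B ∈ L, IsPermOf B A) (hL0 : L ≠ [])
    (hw : w.filter (fun z => decide (z ∈ A)) = L.flatten) (hp : p <+: w) {t s : V}
    (ht : t ∈ A) (hs : s ∈ A) : p.count t ≤ p.count s + 1 := by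
  obtain ⟨j, B, hB, q, hq, hcount⟩ := exists_count_eq_of_prefix hL hL0 hw hp
  have := (hq.count_le t).trans ((hL B hB).1 t ht).le
  rw [hcount t ht, hcount s hs]
  omega

theorem exists_count_le_of_prefix_of_head?_ne (hL : ∀ B ∈ L, IsPermOf B A) (hL0 : L ≠ [])
    (hw : w.filter (fun z => decide (z ∈ A)) = L.flatten) (hp : p <+: w) {a : V} (ha : a ∈ A)
    (hhead : ∀ B ∈ L, B.head? ≠ some a) :
    ∃ b ∈ A, b ≠ a ∧ p.count a ≤ p.count b := by
  obtain ⟨j, B, hB, q, hq, hcount⟩ := exists_count_eq_of_prefix hL hL0 hw hp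
  have hB0 : B ≠ [] := List.ne_nil_of_mem ((hL B hB).mem ha)
  have hbA : B.head hB0 ∈ A := (hL B hB).2 _ (List.head_mem hB0)
  refine ⟨_, hbA, fun h => hhead B hB (h ▸ List.head?_eq_some_head hB0), ?_⟩
  have := hq.count_le_count_of_head?_eq (a := a) (hL B hB).nodup (List.head?_eq_some_head hB0)
  rw [hcount a ha, hcount _ hbA]
  omega

theorem exists_count_le_of_prefix_of_getLast?_ne (hL : ∀ B ∈ L, IsPermOf B A) (hL0 : L ≠ [])
    (hw : w.filter (fun z => decide (z ∈ A)) = L.flatten) (hp : p <+: w) {a : V} (ha : a ∈ A)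
    (hlast : ∀ B ∈ L, B.getLast? ≠ some a) :
    ∃ b ∈ A, b ≠ a ∧ p.count b ≤ p.count a := by
  obtain ⟨j, B, hB, q, hq, hcount⟩ := exists_count_eq_of_prefix hL hL0 hw hp
  have hB0 : B ≠ [] := List.ne_nil_of_mem ((hL B hB).mem ha)
  have hbA : B.getLast hB0 ∈ A := (hL B hB).2 _ (List.getLast_mem hB0)
  refine ⟨_, hbA, fun h => hlast B hB (h ▸ List.getLast?_eq_some_getLast hB0), ?_⟩
  have := hq.count_le_count_of_getLast?_eq (hL B hB).nodup (List.getLast?_eq_some_getLast hB0)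
    ((hL B hB).mem ha)
  rw [hcount a ha, hcount _ hbA]
  omega

theorem alternate_of_forall_head?_ne_getLast?_ne (hL : ∀ B ∈ L, IsPermOf B A) (hL0 : L ≠ [])
    (hw : w.filter (fun z => decide (z ∈ A)) = L.flatten) {a a' : V} (ha : a ∈ A)
    (ha' : a' ∉ A)
    (hhead : ∀ B ∈ L, B.head? ≠ some a) (hlast : ∀ B ∈ L, B.getLast? ≠ some a)
    (hA : ∀ b ∈ A, ∀ c ∈ A, b ≠ c → ¬ Alternate w b c)
    (ha'A : ∀ b ∈ A, b ≠ a → Alternate w b a') : Alternate w a a' := by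
  have hne : ∀ b ∈ A, b ≠ a' := fun b hb h => ha' (h ▸ hb)
  have hsame :
      (∀ b ∈ A, b ≠ a → Leads w b a') ∨ (∀ b ∈ A, b ≠ a → Leads w a' b) := by
    by_contra! h
    obtain ⟨⟨t, ht, hta, hnt⟩, s, hs, hsa, hns⟩ := h
    have ht' := ((alternate_iff_leads (hne t ht)).mp (ha'A t ht hta)).resolve_left hnt
    have hs' := ((alternate_iff_leads (hne s hs)).mp (ha'A s hs hsa)).resolve_right hns
    have hst : s ≠ t := by rintro rfl; exact hnt hs'
    have hst' : Leads w s t := fun p hp =>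
      ⟨(ht' p hp).1.trans (hs' p hp).1, count_le_count_add_one_of_prefix hL hL0 hw hp hs ht⟩
    exact hA s hs t ht hst ((alternate_iff_leads hst).mpr (Or.inl hst'))
  rw [alternate_iff_leads (hne a ha)]
  refine hsame.imp (fun hT p hp => ?_) (fun hS p hp => ?_) <;>
  obtain ⟨b, hb, hba, hcount_b⟩ :=
    exists_count_le_of_prefix_of_head?_ne hL hL0 hw hp ha hhead <;>
  obtain ⟨c, hc, hca, hcount_c⟩ :=
    exists_count_le_of_prefix_of_getLast?_ne hL hL0 hw hp ha hlast
  · have := hT b hb hba p hp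
    have := hT c hc hca p hp
    omega
  · have := hS b hb hba p hp
    have := hS c hc hca p hp
    omega

end Blocks

theorem crown_adj_inl_inr {n : ℕ} {i j : Fin n} :
    (Crown n).Adj (.inl i) (.inr j) ↔ i ≠ j := by
  simp [Crown]

theorem crown_not_adj_inl_inl {n : ℕ} {i j : Fin n} : ¬ (Crown n).Adj (.inl i) (.inl j) := by
  simp [Crown]

theorem mem_leftSet {n : ℕ} {z : Fin n ⊕ Fin n} : z ∈ leftSet n ↔ ∃ i, z = .inl i := by
  cases z <;> simp [leftSet]

theorem crown_first_or_last_general (n k : ℕ)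
    (w : List (Fin n ⊕ Fin n)) (hk : IsUniform w k) (hrep : Represents w (Crown n))
    (u u' : List (Fin n ⊕ Fin n)) (hw : w = u ++ u')
    (P : Fin k → List (Fin n ⊕ Fin n))
    (hP : ∀ i, IsPermOf (P i) (leftSet n))
    (hind : ((u' ++ u).filter fun z => decide (z ∈ leftSet n)) = (List.ofFn P).flatten) :
    ∀ a : Fin n, ∃ j : Fin k,
      (P j).head? = some (Sum.inl a) ∨ (P j).getLast? = some (Sum.inl a) := by
  intro a
  by_contra! hcon
  subst hw
  have hadj : ∀ x y, x ≠ y → ((Crown n).Adj x y ↔ Alternate (u' ++ u) x y) := fun x y hxy =>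
    (hrep.2 x y hxy).trans (hk.alternate_append_comm hxy)
  have hL0 : List.ofFn P ≠ [] := by
    rw [Ne, List.ofFn_eq_nil_iff]
    exact hk.ne_zero (hrep.1 (.inl a))
  refine crown_adj_inl_inr.mp ((hadj (.inl a) (.inr a) Sum.inl_ne_inr).mpr ?_) rfl
  refine alternate_of_forall_head?_ne_getLast?_ne (A := leftSet n)
    (List.forall_mem_ofFn_iff.mpr hP) hL0 hind (by simp [leftSet]) (by simp [leftSet])
    (List.forall_mem_ofFn_iff.mpr fun j => (hcon j).1)
    (List.forall_mem_ofFn_iff.mpr fun j => (hcon j).2) ?_ ?_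
  · rintro _ hb _ hc hbc
    obtain ⟨⟨i, rfl⟩, ⟨j, rfl⟩⟩ := And.intro (mem_leftSet.mp hb) (mem_leftSet.mp hc)
    exact fun h => crown_not_adj_inl_inl ((hadj _ _ hbc).mpr h)
  · rintro _ hb hba
    obtain ⟨i, rfl⟩ := mem_leftSet.mp hb
    exact (hadj _ _ Sum.inl_ne_inr).mp (crown_adj_inl_inr.mpr (fun h => hba (h ▸ rfl)))

/-- Lemma 3 of the paper: let `n ≥ 5` and let `w` be a `k`-uniform word
representing `H_{n,n}` such that some cyclic shift of `w` has its subword induced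
by `A = {1, …, n}` equal to a concatenation `P′₁ ⋯ P′_k` of permutations of `A`.
Then every `a ∈ A` is the first or the last letter of some `P′_j`. -/
theorem crown_first_or_last (n k : ℕ) (hn : 5 ≤ n)
    (w : List (Fin n ⊕ Fin n)) (hk : IsUniform w k) (hrep : Represents w (Crown n))
    (u u' : List (Fin n ⊕ Fin n)) (hw : w = u ++ u')
    (P : Fin k → List (Fin n ⊕ Fin n))
    (hP : ∀ i, IsPermOf (P i) (leftSet n))
    (hind : ((u' ++ u).filter fun z => decide (z ∈ leftSet n)) = (List.ofFn P).flatten) :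
    ∀ a : Fin n, ∃ j : Fin k,
      (P j).head? = some (Sum.inl a) ∨ (P j).getLast? = some (Sum.inl a) :=
  crown_first_or_last_general n k w hk hrep u u' hw P hP hind
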